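/- For every k ≥ 1 there holds the set equality curl[𝒫^{k-1}(ℝ³)]³ = {Δu : u a vector field with components in 𝒫^k(ℝ³) with div u = 0}; in particular, for every vector field v₁ with components in 𝒫^{k-1}(ℝ³) there exists a vector field u with components in 𝒫^k(ℝ³) such that div u = 0 and Δu = curl v₁, and conversely Δu of any divergence-free u with components in 𝒫^k(ℝ³) is the curl of a vector field with components in 𝒫^{k-1}(ℝ³). -/

import Mathlib

open MvPolynomial

/-- The formal Laplacian `Δp = ∑ⱼ ∂ⱼ∂ⱼp` of a polynomial in `d` variables. -/
noncomputable def lap {d : ℕ} (p : MvPolynomial (Fin d) ℝ) : MvPolynomial (Fin d) ℝ :=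
  ∑ j, pderiv j (pderiv j p)

/-- The formal divergence `div v = ∑ᵢ ∂ᵢvᵢ` of a polynomial vector field. -/
noncomputable def pdiv {d : ℕ} (v : Fin d → MvPolynomial (Fin d) ℝ) : MvPolynomial (Fin d) ℝ :=
  ∑ i, pderiv i (v i)

/-- The formal curl of a polynomial vector field on `ℝ³`:
`curl v = (∂₂v₃ − ∂₃v₂, ∂₃v₁ − ∂₁v₃, ∂₁v₂ − ∂₂v₁)` (0-based indices). -/
noncomputable def curl3 (v : Fin 3 → MvPolynomial (Fin 3) ℝ) : Fin 3 → MvPolynomial (Fin 3) ℝ :=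
  ![pderiv 1 (v 2) - pderiv 2 (v 1),
    pderiv 2 (v 0) - pderiv 0 (v 2),
    pderiv 0 (v 1) - pderiv 1 (v 0)]

/-!
Both inclusions come from two identities, valid because partial derivatives commute:
`curl (Δ v) = Δ (curl v)` together with `div (curl v) = 0`, and
`curl (curl v) = ∇ (div v) - Δ v`. The second gives `Δ u = curl (-curl u)` when `div u = 0`.
For the first, solve `Δ wᵢ = v₁ i` with `deg wᵢ ≤ k + 1` and take `u = curl w`.

The Laplacian maps `𝒫^{n+2}` onto `𝒫^n`: for a monomial `x^m`, `Δ (x^(m + 2e₀))` is a nonzero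
multiple of `x^m` plus monomials of the same degree with a larger exponent of `x₀`, so a
descending induction on that exponent reaches every monomial.
-/

section PartialDerivatives

variable {σ R : Type*}

theorem pderiv_comm [CommRing R] (i j : σ) (p : MvPolynomial σ R) :
    pderiv i (pderiv j p) = pderiv j (pderiv i p) := by
  have : ⁅pderiv i, pderiv j⁆ = (0 : Derivation R (MvPolynomial σ R) (MvPolynomial σ R)) :=
    derivation_ext fun k => by
      classical
      rw [Derivation.commutator_apply]
      simp [pderiv_X, Pi.single_apply, apply_ite]
  rw [← sub_eq_zero, ← Derivation.commutator_apply, this, Derivation.zero_apply]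

theorem pderiv_pderiv_monomial [CommSemiring R] (j : σ) (s : σ →₀ ℕ) (a : R) :
    pderiv j (pderiv j (monomial s a)) =
      monomial (s - Finsupp.single j 2) (a * s j * (s j - 1 : ℕ)) := by
  classical
  rw [pderiv_monomial, pderiv_monomial, tsub_tsub, ← Finsupp.single_add]
  simp

theorem monomial_mem_restrictTotalDegree [CommSemiring R] {n : ℕ} {m : σ →₀ ℕ} {a : R} :
    monomial m a ∈ restrictTotalDegree σ R n ↔ m.degree ≤ n ∨ a = 0 :=
  monomial_mem_restrictSupport R

theorem totalDegree_pderiv_le [CommSemiring R] (i : σ) (p : MvPolynomial σ R) :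
    (pderiv i p).totalDegree ≤ p.totalDegree - 1 := by
  suffices h : restrictTotalDegree σ R p.totalDegree ≤
      (restrictTotalDegree σ R (p.totalDegree - 1)).comap (pderiv i).toLinearMap from
    (mem_restrictTotalDegree _ _ _).1 (h ((mem_restrictTotalDegree _ _ _).2 le_rfl))
  rw [restrictTotalDegree, restrictSupport_eq_span, Submodule.span_le]
  rintro _ ⟨m, hm, rfl⟩
  change pderiv i (monomial m (1 : R)) ∈ restrictTotalDegree σ R _
  rw [pderiv_monomial, monomial_mem_restrictTotalDegree]
  by_cases hi : m i = 0
  · simp [hi]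
  have : (m - Finsupp.single i 1).degree + 1 = m.degree := by
    simpa using congrArg Finsupp.degree
      (tsub_add_cancel_of_le (Finsupp.single_le_iff.2 (Nat.one_le_iff_ne_zero.2 hi)))
  exact Or.inl (by change m.degree ≤ _ at hm; omega)

end PartialDerivatives

section Laplacian

variable {d : ℕ}

noncomputable def lapLinearMap (d : ℕ) : MvPolynomial (Fin d) ℝ →ₗ[ℝ] MvPolynomial (Fin d) ℝ :=
  ∑ j, (pderiv j).toLinearMap ∘ₗ (pderiv j).toLinearMap

theorem lapLinearMap_apply (p : MvPolynomial (Fin d) ℝ) : lapLinearMap d p = lap p := by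
  simp [lapLinearMap, lap]

theorem lap_sub (p q : MvPolynomial (Fin d) ℝ) : lap (p - q) = lap p - lap q := by
  simp only [← lapLinearMap_apply, map_sub]

theorem lap_pderiv (i : Fin d) (p : MvPolynomial (Fin d) ℝ) :
    lap (pderiv i p) = pderiv i (lap p) := by
  simp only [lap, map_sum, pderiv_comm i]

theorem monomial_one_mem_map_lapLinearMap (i : Fin d) {n : ℕ} {m : Fin d →₀ ℕ}
    (hm : m.degree ≤ n) :
    monomial m 1 ∈ (restrictTotalDegree (Fin d) ℝ (n + 2)).map (lapLinearMap d) := by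
  induction hnm : n - m i using Nat.strong_induction_on generalizing m with
  | _ k ih =>
  set S := (restrictTotalDegree (Fin d) ℝ (n + 2)).map (lapLinearMap d)
  set M := m + Finsupp.single i 2
  have hMdeg : M.degree = m.degree + 2 := by simp [M]
  have hlapM : lap (monomial M (1 : ℝ)) ∈ S :=
    ⟨monomial M 1, monomial_mem_restrictTotalDegree.2 (Or.inl (by omega)),
      lapLinearMap_apply _⟩
  set c : ℝ := (m i + 2) * (m i + 1)
  have hii : pderiv i (pderiv i (monomial M (1 : ℝ))) = c • monomial m (1 : ℝ) := by
    rw [pderiv_pderiv_monomial, smul_monomial]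
    simp [M, c]
  have hjj : ∀ j ∈ Finset.univ.erase i, pderiv j (pderiv j (monomial M (1 : ℝ))) ∈ S := by
    intro j hj
    have hji : j ≠ i := Finset.ne_of_mem_erase hj
    have hMj : M j = m j := by simp [M, hji]
    rw [pderiv_pderiv_monomial, hMj]
    by_cases hmj : 2 ≤ m j
    · set M' := M - Finsupp.single j 2
      have hM'i : M' i = m i + 2 := by simp [M', M, hji.symm]
      have hM' : M'.degree + 2 = M.degree := by
        simpa using congrArg Finsupp.degree
          (tsub_add_cancel_of_le (Finsupp.single_le_iff.2 (hMj ▸ hmj) : Finsupp.single j 2 ≤ M))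
      have hM'i_le : M' i ≤ M'.degree := Finsupp.le_degree i M'
      rw [← mul_one (1 * _ * _), ← smul_eq_mul, ← smul_monomial]
      exact S.smul_mem _ (ih (n - M' i) (by omega) (by omega) rfl)
    · interval_cases m j <;> simp
  have hc : c ≠ 0 := by positivity
  rw [← inv_smul_smul₀ hc (monomial m (1 : ℝ))]
  refine S.smul_mem _ ?_
  rw [← hii, eq_sub_of_add_eq (Finset.add_sum_erase _
    (fun j => pderiv j (pderiv j (monomial M (1 : ℝ)))) (Finset.mem_univ i))]
  exact S.sub_mem hlapM (S.sum_mem hjj)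

theorem restrictTotalDegree_le_map_lapLinearMap [NeZero d] (n : ℕ) :
    restrictTotalDegree (Fin d) ℝ n ≤
      (restrictTotalDegree (Fin d) ℝ (n + 2)).map (lapLinearMap d) := by
  rw [restrictTotalDegree, restrictSupport_eq_span, Submodule.span_le]
  rintro _ ⟨m, hm, rfl⟩
  exact monomial_one_mem_map_lapLinearMap 0 hm

theorem exists_lap_eq_of_totalDegree_le [NeZero d] {n : ℕ} {p : MvPolynomial (Fin d) ℝ}
    (hp : p.totalDegree ≤ n) : ∃ w, w.totalDegree ≤ n + 2 ∧ lap w = p := by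
  obtain ⟨w, hw, rfl⟩ :=
    restrictTotalDegree_le_map_lapLinearMap n ((mem_restrictTotalDegree _ _ _).2 hp)
  exact ⟨w, (mem_restrictTotalDegree _ _ _).1 hw, (lapLinearMap_apply w).symm⟩

end Laplacian

section Curl

variable (v : Fin 3 → MvPolynomial (Fin 3) ℝ)

theorem totalDegree_curl3_le {n : ℕ} (hv : ∀ i, (v i).totalDegree ≤ n) (i : Fin 3) :
    (curl3 v i).totalDegree ≤ n - 1 := by
  have h : ∀ j k, (pderiv j (v k) - pderiv k (v j)).totalDegree ≤ n - 1 := fun j k =>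
    (totalDegree_sub _ _).trans <| max_le
      ((totalDegree_pderiv_le _ _).trans (Nat.sub_le_sub_right (hv k) 1))
      ((totalDegree_pderiv_le _ _).trans (Nat.sub_le_sub_right (hv j) 1))
  fin_cases i <;> exact h _ _

theorem curl3_neg : curl3 (-v) = -curl3 v := by
  funext i; fin_cases i <;> simp [curl3] <;> ring

theorem pdiv_curl3 : pdiv (curl3 v) = 0 := by
  simp [pdiv, curl3, Fin.sum_univ_three, pderiv_comm (1 : Fin 3) 0, pderiv_comm (2 : Fin 3) 0,
    pderiv_comm (2 : Fin 3) 1]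

theorem curl3_lap : curl3 (fun i => lap (v i)) = fun i => lap (curl3 v i) := by
  funext i; fin_cases i <;> simp [curl3, lap_sub, lap_pderiv]

theorem curl3_curl3 : curl3 (curl3 v) = fun i => pderiv i (pdiv v) - lap (v i) := by
  funext i
  fin_cases i <;>
    simp [curl3, pdiv, lap, Fin.sum_univ_three, pderiv_comm (1 : Fin 3) 0,
      pderiv_comm (2 : Fin 3) 0, pderiv_comm (2 : Fin 3) 1] <;>
    ring

end Curl

/-- For every `k ≥ 1`: `curl [𝒫^{k-1}(ℝ³)]³ = {Δu : u ∈ [𝒫ᵏ(ℝ³)]³, div u = 0}`. -/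
theorem curl_range_eq_lap_of_divfree (k : ℕ) (hk : 1 ≤ k) :
    {f : Fin 3 → MvPolynomial (Fin 3) ℝ |
        ∃ v₁ : Fin 3 → MvPolynomial (Fin 3) ℝ,
          (∀ i, (v₁ i).totalDegree ≤ k - 1) ∧ f = curl3 v₁} =
      {f : Fin 3 → MvPolynomial (Fin 3) ℝ |
        ∃ u : Fin 3 → MvPolynomial (Fin 3) ℝ,
          (∀ i, (u i).totalDegree ≤ k) ∧ pdiv u = 0 ∧ f = fun i => lap (u i)} := by
  ext f
  constructor
  · rintro ⟨v, hv, rfl⟩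
    choose w hw hlap using fun i => exists_lap_eq_of_totalDegree_le (hv i)
    refine ⟨curl3 w, fun i => ?_, pdiv_curl3 w, ?_⟩
    · have := totalDegree_curl3_le w hw i
      omega
    · rw [← curl3_lap]
      simp only [hlap]
  · rintro ⟨u, hu, hdiv, rfl⟩
    refine ⟨-curl3 u, fun i => ?_, ?_⟩
    · simpa using totalDegree_curl3_le u hu i
    · rw [curl3_neg, curl3_curl3]
      ext i
      simp [hdiv]
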